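/- Lifting attracting cycles to higher degree: let p be a monic polynomial of degree d and α ∈ ℂ, and set p̃(Z) = (Z − α)·p(Z). For a point z = (z₁,…,z_d, α) ∈ ℂ^{d+1} with pairwise distinct entries, the Jacobian matrix of W_{p̃} at z is block upper-triangular: its upper-left d×d block is the Jacobian of W_p at (z₁,…,z_d), its lower-left 1×d block is zero, and its lower-right entry is λ = 1 − p(α)/∏_{j=1}^d (α − z_j). -/

import Mathlib

open Polynomial Finset

/-!
Because `p̃ = (Z - α) p` and the last coordinate of `z` is `α`, the `k`-th Weierstrass
correction of `p̃` for `k ≤ d` carries the factor `z_k - α` in both numerator and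
denominator; cancelling it leaves the Weierstrass correction of `p`, as long as the last
coordinate stays at `α`. The last component is `w ↦ w - (w - α) p(w) / ∏_j (w - z_j)`:
it is constantly `α` while its own coordinate stays at `α`, and, since `w - α` vanishes
at `α`, the product rule gives it the derivative `1 - p(α) / ∏_j (α - z_j)` there.
-/

noncomputable def weierstrassMap {K : Type*} [Field K] {m : ℕ} (q : K[X]) (w : Fin m → K)
    (k : Fin m) : K :=
  w k - q.eval (w k) / ∏ j ∈ univ.erase k, (w k - w j)

section Products

variable {M : Type*} [CommMonoid M]

theorem Finset.prod_univ_erase_eq_prod_update {ι : Type*} [Fintype ι] [DecidableEq ι]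
    (f : ι → M) (a : ι) : ∏ x ∈ univ.erase a, f x = ∏ x, Function.update f a 1 x := by
  rw [prod_update_of_mem (mem_univ a), one_mul, sdiff_singleton_eq_erase]

variable {n : ℕ}

theorem Fin.prod_univ_erase_last (f : Fin (n + 1) → M) :
    ∏ k ∈ univ.erase (Fin.last n), f k = ∏ k : Fin n, f k.castSucc := by
  rw [← compl_singleton, ← Fin.image_castSucc,
    prod_image fun _ _ _ _ h => Fin.castSucc_injective n h]

theorem Fin.prod_univ_erase_castSucc (f : Fin (n + 1) → M) (i : Fin n) :
    ∏ k ∈ univ.erase i.castSucc, f k = (∏ k ∈ univ.erase i, f k.castSucc) * f (Fin.last n) := by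
  rw [prod_univ_erase_eq_prod_update, Fin.prod_univ_castSucc, prod_univ_erase_eq_prod_update,
    Function.update_of_ne (Fin.castSucc_lt_last i).ne']
  exact congrArg (fun g : Fin n → M => (∏ k, g k) * f (Fin.last n))
    (Function.update_comp_eq_of_injective f (Fin.castSucc_injective n) i 1)

end Products

section Lift

variable {K : Type*} [Field K] {n : ℕ} (p : K[X]) (a : K) (v : Fin (n + 1) → K)

theorem weierstrassMap_X_sub_C_mul_last :
    weierstrassMap ((X - C a) * p) v (Fin.last n)
      = v (Fin.last n) - (v (Fin.last n) - a)
          * (p.eval (v (Fin.last n)) / ∏ k : Fin n, (v (Fin.last n) - v k.castSucc)) := by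
  rw [weierstrassMap, Fin.prod_univ_erase_last, eval_mul, mul_div_assoc]
  simp only [eval_sub, eval_X, eval_C]

theorem weierstrassMap_X_sub_C_mul_last_of_eq (hv : v (Fin.last n) = a) :
    weierstrassMap ((X - C a) * p) v (Fin.last n) = a := by
  rw [weierstrassMap_X_sub_C_mul_last, hv, sub_self, zero_mul, sub_zero]

theorem weierstrassMap_X_sub_C_mul_castSucc (hv : v (Fin.last n) = a) {i : Fin n}
    (hi : v i.castSucc ≠ a) :
    weierstrassMap ((X - C a) * p) v i.castSucc = weierstrassMap p (fun k => v k.castSucc) i := by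
  rw [weierstrassMap, weierstrassMap, Fin.prod_univ_erase_castSucc, hv, eval_mul, mul_comm]
  simp only [eval_sub, eval_X, eval_C]
  rw [mul_div_mul_right _ _ (sub_ne_zero.mpr hi)]

end Lift

theorem hasDerivAt_id_sub_sub_const_mul {𝕜 : Type*} [NontriviallyNormedField 𝕜] {g : 𝕜 → 𝕜}
    {a : 𝕜} (hg : DifferentiableAt 𝕜 g a) :
    HasDerivAt (fun w => w - (w - a) * g w) (1 - g a) a := by
  have h := (hasDerivAt_id' a).sub (((hasDerivAt_id' a).sub_const a).mul hg.hasDerivAt)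
  rwa [sub_self, zero_mul, add_zero, one_mul] at h

theorem weierstrass_lift_jacobian_general
    (d : ℕ) (p ptilde : Polynomial ℂ)
    (α : ℂ) (hptilde : ptilde = (X - C α) * p)
    (W : (Fin d → ℂ) → Fin d → ℂ)
    (hW : ∀ (w : Fin d → ℂ) (k : Fin d),
      W w k = w k - p.eval (w k) / ∏ j ∈ univ.erase k, (w k - w j))
    (Wt : (Fin (d + 1) → ℂ) → Fin (d + 1) → ℂ)
    (hWt : ∀ (w : Fin (d + 1) → ℂ) (k : Fin (d + 1)),
      Wt w k = w k - ptilde.eval (w k) / ∏ j ∈ univ.erase k, (w k - w j))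
    (z : Fin (d + 1) → ℂ) (hz : Function.Injective z)
    (hlast : z (Fin.last d) = α) :
    (∀ j : Fin d,
      deriv (fun w => Wt (Function.update z j.castSucc w) (Fin.last d))
        (z j.castSucc) = 0) ∧
    (deriv (fun w => Wt (Function.update z (Fin.last d) w) (Fin.last d))
        (z (Fin.last d))
      = 1 - p.eval α / ∏ j : Fin d, (α - z j.castSucc)) ∧
    (∀ i j : Fin d,
      deriv (fun w => Wt (Function.update z j.castSucc w) i.castSucc)
          (z j.castSucc)
        = deriv (fun w => W (Function.update (fun i' : Fin d => z i'.castSucc) j w) i)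
            (z j.castSucc)) := by
  obtain rfl : W = weierstrassMap p := funext₂ hW
  obtain rfl : Wt = weierstrassMap ptilde := funext₂ hWt
  subst hptilde
  have hzα (i : Fin d) : z i.castSucc ≠ α :=
    hlast ▸ hz.ne (Fin.castSucc_lt_last i).ne
  have hupd_last (j : Fin d) (w : ℂ) : Function.update z j.castSucc w (Fin.last d) = α := by
    rw [Function.update_of_ne (Fin.castSucc_lt_last j).ne', hlast]
  refine ⟨fun j => ?_, ?_, fun i j => ?_⟩
  · simp only [weierstrassMap_X_sub_C_mul_last_of_eq p α _ (hupd_last j _), deriv_const]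
  · have hg : DifferentiableAt ℂ (fun w => p.eval w / ∏ k : Fin d, (w - z k.castSucc)) α :=
      p.differentiableAt.div (by fun_prop)
        (prod_ne_zero_iff.mpr fun k _ => sub_ne_zero.mpr (hzα k).symm)
    rw [hlast, ← (hasDerivAt_id_sub_sub_const_mul hg).deriv]
    congr 1
    funext w
    simp [weierstrassMap_X_sub_C_mul_last]
  · refine Filter.EventuallyEq.deriv_eq ?_
    filter_upwards [eventually_ne_nhds (hzα j)] with w hw
    rw [weierstrassMap_X_sub_C_mul_castSucc p α _ (hupd_last j w) ?_]
    · exact congrArg (weierstrassMap p · i)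
        (Function.update_comp_eq_of_injective z (Fin.castSucc_injective d) j w)
    · rcases eq_or_ne i j with rfl | hij
      · rwa [Function.update_self]
      · rw [Function.update_of_ne ((Fin.castSucc_injective d).ne hij)]
        exact hzα i

/-- Lifting lemma (Jacobian part): for `p̃(Z) = (Z−α)p(Z)` and a point
`z = (z₁,…,z_d, α)` with pairwise distinct entries, the Jacobian of `W_{p̃}`
at `z` is block upper-triangular: the lower-left `1×d` block vanishes, the
lower-right entry is `λ = 1 − p(α)/∏_j (α − z_j)`, and the upper-left `d×d`
block is the Jacobian of `W_p` at `(z₁,…,z_d)`. -/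
theorem weierstrass_lift_jacobian
    (d : ℕ) (p ptilde : Polynomial ℂ) (hmonic : p.Monic) (hdeg : p.natDegree = d)
    (α : ℂ) (hptilde : ptilde = (X - C α) * p)
    (W : (Fin d → ℂ) → Fin d → ℂ)
    (hW : ∀ (w : Fin d → ℂ) (k : Fin d),
      W w k = w k - p.eval (w k) / ∏ j ∈ univ.erase k, (w k - w j))
    (Wt : (Fin (d + 1) → ℂ) → Fin (d + 1) → ℂ)
    (hWt : ∀ (w : Fin (d + 1) → ℂ) (k : Fin (d + 1)),
      Wt w k = w k - ptilde.eval (w k) / ∏ j ∈ univ.erase k, (w k - w j))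
    (z : Fin (d + 1) → ℂ) (hz : Function.Injective z)
    (hlast : z (Fin.last d) = α) :
    (∀ j : Fin d,
      deriv (fun w => Wt (Function.update z j.castSucc w) (Fin.last d))
        (z j.castSucc) = 0) ∧
    (deriv (fun w => Wt (Function.update z (Fin.last d) w) (Fin.last d))
        (z (Fin.last d))
      = 1 - p.eval α / ∏ j : Fin d, (α - z j.castSucc)) ∧
    (∀ i j : Fin d,
      deriv (fun w => Wt (Function.update z j.castSucc w) i.castSucc)
          (z j.castSucc)
        = deriv (fun w => W (Function.update (fun i' : Fin d => z i'.castSucc) j w) i)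
            (z j.castSucc)) :=
  weierstrass_lift_jacobian_general d p ptilde α hptilde W hW Wt hWt z hz hlast
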